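/- arXiv:2103.07439 — 9 statements merged into one kernel-verified Lean document; each statement's English description precedes it below -/
import Mathlib

section
/- Let Γ : ℓ∞⁺ → ℓ∞⁺ be a monotone continuous operator such that Γᵏ(s) → 0 (in ℓ∞ norm) for every s ∈ ℓ∞⁺. Suppose in addition that Q(s) = sup_k Γᵏ(s) is well-defined. Then the set { s : Γ(s) ≤ s } is path-connected: every point s with Γ(s) ≤ s can be joined to 0 by a continuous path inside the set. -/
open scoped BoundedContinuousFunction

open Filter Set

section Aux

variable {E : Type*} [NormedAddCommGroup E] [NormedSpace ℝ E]

/-- Piecewise-linear interpolation of a sequence. -/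
noncomputable def seqInterp (a : ℕ → E) (y : ℝ) : E :=
  a ⌊y⌋₊ + (y - ⌊y⌋₊) • (a (⌊y⌋₊ + 1) - a ⌊y⌋₊)

/-- The affine segment function. -/
noncomputable def seqAff (a : ℕ → E) (n : ℕ) (y : ℝ) : E :=
  a n + (y - n) • (a (n + 1) - a n)

lemma seqAff_continuous (a : ℕ → E) (n : ℕ) : Continuous (seqAff a n) :=
  continuous_const.add (((continuous_id.sub continuous_const).smul continuous_const))

lemma seqInterp_eqOn (a : ℕ → E) (n : ℕ) :
    EqOn (seqInterp a) (seqAff a n) (Icc (n : ℝ) (n + 1)) := by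
  intro y hy
  rcases lt_or_eq_of_le hy.2 with h | h
  · have hfl : ⌊y⌋₊ = n := by
      rw [Nat.floor_eq_iff (by exact_mod_cast le_trans (Nat.cast_nonneg n) hy.1)]
      exact ⟨hy.1, by exact_mod_cast h⟩
    unfold seqInterp seqAff
    rw [hfl]
  · have hfl : ⌊y⌋₊ = n + 1 := by
      rw [h]; exact_mod_cast Nat.floor_natCast (n + 1)
    unfold seqInterp seqAff
    rw [hfl, h]
    push_cast
    rw [show ((n : ℝ) + 1 - ((n : ℝ) + 1)) = 0 by ring,
      show ((n : ℝ) + 1 - n) = 1 by ring, zero_smul, one_smul, add_zero]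
    abel

lemma seqInterp_eqOn_nonpos (a : ℕ → E) :
    EqOn (seqInterp a) (seqAff a 0) (Iic (0 : ℝ)) := by
  intro y hy
  have hfl : ⌊y⌋₊ = 0 := Nat.floor_eq_zero.2 (lt_of_le_of_lt hy one_pos)
  simp [seqInterp, seqAff, hfl]

lemma seqInterp_continuous (a : ℕ → E) : Continuous (seqInterp a) := by
  rw [continuous_iff_continuousAt]
  intro y0
  rcases lt_or_ge y0 0 with h | h
  · exact ((seqAff_continuous a 0).continuousAt).congr
      (Filter.eventuallyEq_of_mem (Iio_mem_nhds h)
        (fun y hy => (seqInterp_eqOn_nonpos a (le_of_lt (Set.mem_Iio.1 hy))).symm))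
  · set n := ⌊y0⌋₊ with hn
    have h1 : (n : ℝ) ≤ y0 := Nat.floor_le h
    have h2 : y0 < n + 1 := Nat.lt_floor_add_one y0
    rcases lt_or_eq_of_le h1 with hgt | heq
    · exact ((seqAff_continuous a n).continuousAt).congr
        (Filter.eventuallyEq_of_mem (Ioo_mem_nhds hgt h2)
          (fun y hy => (seqInterp_eqOn a n ⟨hy.1.le, hy.2.le⟩).symm))
    · -- y0 = n
      have hIci : ContinuousWithinAt (seqInterp a) (Ici y0) y0 := by
        refine ((seqAff_continuous a n).continuousWithinAt).congr_of_eventuallyEq ?_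
          (seqInterp_eqOn a n ⟨h1, h2.le⟩)
        filter_upwards [inter_mem_nhdsWithin (Ici y0) (Iio_mem_nhds h2)] with y hy
        exact seqInterp_eqOn a n ⟨heq ▸ hy.1, hy.2.le⟩
      have hIic : ContinuousWithinAt (seqInterp a) (Iic y0) y0 := by
        rcases n.eq_zero_or_eq_succ_pred with hz | hsucc
        · refine ((seqAff_continuous a 0).continuousWithinAt).congr_of_eventuallyEq ?_ ?_
          · filter_upwards [self_mem_nhdsWithin] with y hy
            exact seqInterp_eqOn_nonpos a (by rw [← heq, hz] at hy; exact_mod_cast hy)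
          · exact seqInterp_eqOn a n ⟨h1, h2.le⟩ |>.trans (by rw [hz])
        · set m := n - 1 with hm
          have hnm : n = m + 1 := hsucc
          have hmlt : (m : ℝ) < y0 := by
            rw [← heq, hnm]; push_cast; linarith
          refine ((seqAff_continuous a m).continuousWithinAt).congr_of_eventuallyEq ?_ ?_
          · filter_upwards [inter_mem_nhdsWithin (Iic y0) (Ioi_mem_nhds hmlt)] with y hy
            refine seqInterp_eqOn a m ⟨hy.2.le, ?_⟩
            have : y ≤ y0 := hy.1
            rw [← heq, hnm] at this; push_cast at this ⊢; linarith
          · have e1 : seqInterp a y0 = a n := by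
              simp [seqInterp, ← hn, ← heq]
            have e2 : seqAff a m y0 = a (m + 1) := by
              simp only [seqAff, ← heq, hnm]
              push_cast
              rw [show ((m : ℝ) + 1 - m) = 1 by ring, one_smul]
              abel
            rw [e1, e2, hnm]
      have := hIic.union hIci
      rwa [Iic_union_Ici, continuousWithinAt_univ] at this

/-- Points of the interpolation lie on segments of the sequence. -/
lemma seqInterp_mem_segment (a : ℕ → E) (y : ℝ) (hy : 0 ≤ y) :
    seqInterp a y ∈ segment ℝ (a ⌊y⌋₊) (a (⌊y⌋₊ + 1)) := by
  rw [segment_eq_image']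
  refine ⟨y - ⌊y⌋₊, ⟨by simpa using Nat.floor_le hy, ?_⟩, rfl⟩
  have := Nat.lt_floor_add_one y
  linarith

/-- Main auxiliary lemma: infinite concatenation of segments gives a path. -/
lemma joinedIn_of_segments {S : Set E} (a : ℕ → E) (L : E)
    (hseg : ∀ n, segment ℝ (a n) (a (n + 1)) ⊆ S) (hL : L ∈ S)
    (hlim : Tendsto a atTop (nhds L)) : JoinedIn S (a 0) L := by
  -- the path function
  set q : unitInterval → ℝ := fun x => (x : ℝ) / (1 - (x : ℝ)) with hq
  set p : unitInterval → E := fun x => if (x : ℝ) < 1 then seqInterp a (q x) else L with hp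
  have hq_nonneg : ∀ x : unitInterval, (x : ℝ) < 1 → 0 ≤ q x := fun x hx =>
    div_nonneg x.2.1 (by linarith)
  have hmem : ∀ x, p x ∈ S := by
    intro x
    by_cases hx : (x : ℝ) < 1
    · simp only [hp, if_pos hx]
      exact hseg _ (seqInterp_mem_segment a (q x) (hq_nonneg x hx))
    · simp only [hp, if_neg hx]; exact hL
  have hcontp : Continuous p := by
    rw [continuous_iff_continuousAt]
    intro x0
    by_cases hx0 : (x0 : ℝ) < 1
    · have hopen : IsOpen {x : unitInterval | (x : ℝ) < 1} :=
        isOpen_lt continuous_subtype_val continuous_const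
      have hqc : ContinuousAt q x0 := by
        apply ContinuousAt.div
        · exact continuous_subtype_val.continuousAt
        · exact (continuous_const.sub continuous_subtype_val).continuousAt
        · intro h; rw [sub_eq_zero] at h; exact absurd h.symm (ne_of_lt hx0)
      refine (((seqInterp_continuous a).continuousAt).comp hqc).congr ?_
      filter_upwards [hopen.mem_nhds hx0] with x hx
      simp only [hp, if_pos hx, Function.comp]
    · -- x0 = 1
      have hx1 : (x0 : ℝ) = 1 := le_antisymm x0.2.2 (not_lt.1 hx0)
      have hpx0 : p x0 = L := by simp only [hp]; exact if_neg hx0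
      rw [ContinuousAt, hpx0, Metric.tendsto_nhds]
      intro ε hε
      obtain ⟨N, hN⟩ := (Metric.tendsto_atTop.1 hlim) ε hε
      have hopen : IsOpen {x : unitInterval | (N : ℝ) / (N + 1) < (x : ℝ)} :=
        isOpen_lt continuous_const continuous_subtype_val
      have hx0mem : x0 ∈ {x : unitInterval | (N : ℝ) / (N + 1) < (x : ℝ)} := by
        simp only [mem_setOf_eq, hx1]
        rw [div_lt_one (by positivity)]; linarith
      filter_upwards [hopen.mem_nhds hx0mem] with x hx
      by_cases hxlt : (x : ℝ) < 1
      · have hy : (N : ℝ) ≤ q x := by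
          rw [hq]
          rw [le_div_iff₀ (by linarith)]
          have hx' : (N : ℝ) / (N + 1) < (x : ℝ) := hx
          rw [div_lt_iff₀ (by positivity)] at hx'
          nlinarith
        set y := q x with hy'
        have hy0 : 0 ≤ y := le_trans (Nat.cast_nonneg N) hy
        set n := ⌊y⌋₊ with hn
        have hnN : N ≤ n := Nat.le_floor hy
        have hα0 : 0 ≤ y - n := by simpa using Nat.floor_le hy0
        have hα1 : y - n ≤ 1 := by have := Nat.lt_floor_add_one y; linarith
        have hd1 : dist (a n) L < ε := hN n hnN
        have hd2 : dist (a (n + 1)) L < ε := hN (n + 1) (le_trans hnN (Nat.le_succ n))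
        have : p x = a n + (y - n) • (a (n + 1) - a n) := by
          simp only [hp, if_pos hxlt, seqInterp, ← hy', ← hn]
        rw [this]
        have key : a n + (y - n) • (a (n + 1) - a n) - L
            = (1 - (y - n)) • (a n - L) + (y - n) • (a (n + 1) - L) := by
          simp only [smul_sub, sub_smul, one_smul]; abel
        rw [dist_eq_norm, key]
        calc ‖(1 - (y - n)) • (a n - L) + (y - n) • (a (n + 1) - L)‖
            ≤ ‖(1 - (y - n)) • (a n - L)‖ + ‖(y - n) • (a (n + 1) - L)‖ := norm_add_le _ _
          _ = (1 - (y - n)) * ‖a n - L‖ + (y - n) * ‖a (n + 1) - L‖ := by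
              rw [norm_smul, norm_smul, Real.norm_eq_abs, Real.norm_eq_abs,
                abs_of_nonneg (by linarith), abs_of_nonneg hα0]
          _ ≤ (1 - (y - n)) * max ‖a n - L‖ ‖a (n + 1) - L‖
                + (y - n) * max ‖a n - L‖ ‖a (n + 1) - L‖ :=
              add_le_add
                (mul_le_mul_of_nonneg_left (le_max_left _ _) (by linarith))
                (mul_le_mul_of_nonneg_left (le_max_right _ _) hα0)
          _ = max ‖a n - L‖ ‖a (n + 1) - L‖ := by ring
          _ < ε := by
              rw [dist_eq_norm] at hd1 hd2
              exact max_lt hd1 hd2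
      · simp only [hp, if_neg hxlt, dist_self]; exact hε
  have hsrc : p 0 = a 0 := by
    have h0 : ((0 : unitInterval) : ℝ) = 0 := rfl
    simp only [hp, hq, h0]
    rw [if_pos one_pos]
    norm_num [seqInterp]
  have htgt : p 1 = L := by
    have h1 : ((1 : unitInterval) : ℝ) = 1 := rfl
    simp only [hp, hq, h1]
    rw [if_neg (lt_irrefl 1)]
  exact ⟨⟨⟨p, hcontp⟩, hsrc, htgt⟩, fun t => hmem t⟩

end Aux

/-- If `Γ` is a monotone continuous operator on the positive cone of
`ℓ∞` (modeled as `ℕ →ᵇ ℝ`) with `Γ(0) = 0` and `‖Γᵏ(s)‖ → 0` for every `s` in the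
cone (and `Q(s) = sup_k Γᵏ(s)` well-defined), then the set of points of decay
`{s ≥ 0 : Γ(s) ≤ s}` is path-connected: every point of decay can be joined to `0`
by a continuous path inside the set. -/
theorem stmt7 (Γ : (ℕ →ᵇ ℝ) → (ℕ →ᵇ ℝ))
    (hcont : Continuous Γ)
    (hmono : ∀ s t : ℕ →ᵇ ℝ, (∀ i, s i ≤ t i) → ∀ i, Γ s i ≤ Γ t i)
    (hΓ0 : Γ 0 = 0)
    (hattr : ∀ s : ℕ →ᵇ ℝ, (∀ i, 0 ≤ s i) →
      Filter.Tendsto (fun k => ‖Γ^[k] s‖) Filter.atTop (nhds 0))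
    (hQbdd : ∀ s : ℕ →ᵇ ℝ, (∀ i, 0 ≤ s i) →
      ∀ i, BddAbove (Set.range fun k => (Γ^[k] s) i)) :
    ∀ s : ℕ →ᵇ ℝ, (∀ i, 0 ≤ s i) → (∀ i, Γ s i ≤ s i) →
      JoinedIn {t : ℕ →ᵇ ℝ | (∀ i, 0 ≤ t i) ∧ ∀ i, Γ t i ≤ t i} s 0 := by
  intro s hs hΓs
  set a : ℕ → (ℕ →ᵇ ℝ) := fun k => Γ^[k] s with ha
  have hstep : ∀ k, a (k + 1) = Γ (a k) := fun k => Function.iterate_succ_apply' Γ k s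
  have hnonneg : ∀ k i, 0 ≤ a k i := by
    intro k
    induction k with
    | zero => exact hs
    | succ k ih =>
      intro i
      rw [hstep k]
      calc (0 : ℝ) = Γ 0 i := by rw [hΓ0]; rfl
        _ ≤ Γ (a k) i := hmono 0 (a k) (fun j => by simpa using ih j) i
  have hdec : ∀ k i, a (k + 1) i ≤ a k i := by
    intro k
    induction k with
    | zero => intro i; rw [hstep 0]; exact hΓs i
    | succ k ih =>
      intro i
      calc a (k + 2) i = Γ (a (k + 1)) i := by rw [hstep (k + 1)]
        _ ≤ Γ (a k) i := hmono _ _ ih i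
        _ = a (k + 1) i := by rw [← hstep k]
  have hseg : ∀ k, segment ℝ (a k) (a (k + 1)) ⊆
      {t : ℕ →ᵇ ℝ | (∀ i, 0 ≤ t i) ∧ ∀ i, Γ t i ≤ t i} := by
    intro k t ht
    rw [segment_eq_image'] at ht
    obtain ⟨θ, ⟨hθ0, hθ1⟩, rfl⟩ := ht
    have happ : ∀ i, (a k + θ • (a (k + 1) - a k)) i
        = a k i + θ * (a (k + 1) i - a k i) := by
      intro i; simp
    have hup : ∀ i, (a k + θ • (a (k + 1) - a k)) i ≤ a k i := by
      intro i; rw [happ i]; nlinarith [hdec k i]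
    have hlo : ∀ i, a (k + 1) i ≤ (a k + θ • (a (k + 1) - a k)) i := by
      intro i; rw [happ i]; nlinarith [hdec k i]
    constructor
    · intro i; exact le_trans (hnonneg (k + 1) i) (hlo i)
    · intro i
      calc Γ (a k + θ • (a (k + 1) - a k)) i ≤ Γ (a k) i :=
            hmono _ (a k) hup i
        _ = a (k + 1) i := by rw [← hstep k]
        _ ≤ (a k + θ • (a (k + 1) - a k)) i := hlo i
  have hL : (0 : ℕ →ᵇ ℝ) ∈ {t : ℕ →ᵇ ℝ | (∀ i, 0 ≤ t i) ∧ ∀ i, Γ t i ≤ t i} := by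
    refine ⟨fun i => le_refl 0, fun i => ?_⟩
    rw [hΓ0]
  have hlim : Filter.Tendsto a Filter.atTop (nhds 0) := by
    rw [tendsto_zero_iff_norm_tendsto_zero]
    exact hattr s hs
  have := joinedIn_of_segments a 0 hseg hL hlim
  simpa [ha] using this
end

section
/- Let Γ : ℓ∞⁺ → ℓ∞⁺ be a monotone operator such that the induced discrete-time system s(k+1) = Γ(s(k)) is globally attractive (Γᵏ(s) → 0 in norm for every s). Then for all s₁, s₂ in the interior of ℓ∞⁺ with s₁ ≤ s₂, there exists m ∈ ℕ such that Q(s) = ⊕_{k=0}^{m} Γᵏ(s) for all s with s₁ ≤ s ≤ s₂, where Q(s) = sup_{k≥0} Γᵏ(s) and ⊕ denotes componentwise maximum over finitely many vectors. -/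
open scoped BoundedContinuousFunction

/-- If `Γ` is monotone, continuous, and globally attractive
(`‖Γᵏ(s)‖ → 0` for each `s ≥ 0`), then for all `s₁ ≤ s₂` in the interior of the
positive cone (i.e. uniformly bounded away from 0) there is `m` such that
`Q(s) = ⊕_{k=0}^{m} Γᵏ(s)` for every `s` with `s₁ ≤ s ≤ s₂`, where
`Q(s) = sup_{k ≥ 0} Γᵏ(s)`. -/
theorem stmt8 (Γ : (ℕ →ᵇ ℝ) → (ℕ →ᵇ ℝ))
    (hcont : Continuous Γ)
    (hmono : ∀ s t : ℕ →ᵇ ℝ, (∀ i, s i ≤ t i) → ∀ i, Γ s i ≤ Γ t i)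
    (hattr : ∀ s : ℕ →ᵇ ℝ, (∀ i, 0 ≤ s i) →
      Filter.Tendsto (fun k => ‖Γ^[k] s‖) Filter.atTop (nhds 0))
    (Q : (ℕ →ᵇ ℝ) → (ℕ →ᵇ ℝ))
    (hQ : ∀ s : ℕ →ᵇ ℝ, (∀ i, 0 ≤ s i) →
      ∀ i, IsLUB (Set.range fun k => (Γ^[k] s) i) (Q s i)) :
    ∀ s₁ s₂ : ℕ →ᵇ ℝ, (∃ ε > (0 : ℝ), ∀ i, ε ≤ s₁ i) → (∃ ε > (0 : ℝ), ∀ i, ε ≤ s₂ i) →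
      (∀ i, s₁ i ≤ s₂ i) →
      ∃ m : ℕ, ∀ s : ℕ →ᵇ ℝ, (∀ i, s₁ i ≤ s i) → (∀ i, s i ≤ s₂ i) →
        ∀ i, Q s i = (Finset.range (m + 1)).sup'
          (Finset.nonempty_range_iff.mpr (Nat.succ_ne_zero m)) (fun k => (Γ^[k] s) i) := by
  rintro s₁ s₂ ⟨ε, hε, hε₁⟩ ⟨ε₂, hε₂, hε₂'⟩ h12
  have hs₂pos : ∀ i, 0 ≤ s₂ i := fun i => le_trans hε₂.le (hε₂' i)
  -- choose m with ‖Γᵏ s₂‖ < ε for k ≥ m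
  have hev : ∀ᶠ k in Filter.atTop, ‖Γ^[k] s₂‖ < ε := by
    have := hattr s₂ hs₂pos
    exact this.eventually (Filter.Tendsto.eventually_lt_const hε (Filter.tendsto_id))
      |>.mono (fun k hk => hk)
  obtain ⟨m, hm⟩ := hev.exists_forall_of_atTop
  refine ⟨m, fun s hs₁ hs₂ i => ?_⟩
  have hspos : ∀ i, 0 ≤ s i := fun i => le_trans (le_trans hε.le (hε₁ i)) (hs₁ i)
  -- monotone iteration: Γᵏ s ≤ Γᵏ s₂
  have hiter : ∀ k i, (Γ^[k] s) i ≤ (Γ^[k] s₂) i := by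
    intro k
    induction k with
    | zero => simpa using hs₂
    | succ n ih =>
        intro i
        rw [Function.iterate_succ_apply', Function.iterate_succ_apply']
        exact hmono _ _ ih i
  have hlub := hQ s hspos i
  set S := (Finset.range (m + 1)).sup'
    (Finset.nonempty_range_iff.mpr (Nat.succ_ne_zero m)) (fun k => (Γ^[k] s) i) with hS
  -- S is an upper bound of the whole range
  have hub : ∀ k, (Γ^[k] s) i ≤ S := by
    intro k
    rcases le_or_gt k m with hk | hk
    · exact Finset.le_sup' (f := fun k => (Γ^[k] s) i) (Finset.mem_range.mpr (Nat.lt_succ_of_le hk))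
    · have h1 : (Γ^[k] s) i ≤ ‖Γ^[k] s₂‖ :=
        le_trans (hiter k i)
          (le_trans (le_abs_self _) ((Γ^[k] s₂).norm_coe_le_norm i))
      have h2 : ‖Γ^[k] s₂‖ < ε := hm k hk.le
      have h3 : (Γ^[k] s) i ≤ s i := le_trans h1 (le_trans h2.le
        (le_trans (hε₁ i) (hs₁ i)))
      have h0 : s i ≤ S := by
        have : (Γ^[0] s) i ≤ S :=
          Finset.le_sup' (f := fun k => (Γ^[k] s) i) (Finset.mem_range.mpr (Nat.succ_pos m))
        simpa using this
      exact le_trans h3 h0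
  refine le_antisymm (hlub.2 ?_) ?_
  · rintro x ⟨k, rfl⟩
    exact hub k
  · exact Finset.sup'_le _ _ fun k _ => hlub.1 ⟨k, rfl⟩
end

section
/- Let Γ : ℓ∞⁺ → ℓ∞⁺ be a monotone operator with Γᵏ(s) → 0 in norm for every s ∈ ℓ∞⁺, and let Q(s) = sup_{k≥0} Γᵏ(s) be well-defined. Then for each q in the interior of ℓ∞⁺ and each ε > 0, there exists m ∈ ℕ such that for all s with 0 ≤ s ≤ q: ⊕_{k=0}^{m} Γᵏ(s) ≤ Q(s) ≤ ⊕_{k=0}^{m} Γᵏ(s) + ε·𝟙, where 𝟙 = (1,1,1,…). -/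
open scoped BoundedContinuousFunction

/-- If `Γ` is monotone with `‖Γᵏ(s)‖ → 0` for every `s ≥ 0` and
`Q(s) = sup_{k ≥ 0} Γᵏ(s)` is well-defined, then for each `q` in the interior of the
positive cone and each `ε > 0` there is `m` such that for all `0 ≤ s ≤ q`:
`⊕_{k=0}^{m} Γᵏ(s) ≤ Q(s) ≤ ⊕_{k=0}^{m} Γᵏ(s) + ε·𝟙`. -/
theorem stmt9 (Γ : (ℕ →ᵇ ℝ) → (ℕ →ᵇ ℝ))
    (hmono : ∀ s t : ℕ →ᵇ ℝ, (∀ i, s i ≤ t i) → ∀ i, Γ s i ≤ Γ t i)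
    (hattr : ∀ s : ℕ →ᵇ ℝ, (∀ i, 0 ≤ s i) →
      Filter.Tendsto (fun k => ‖Γ^[k] s‖) Filter.atTop (nhds 0))
    (Q : (ℕ →ᵇ ℝ) → (ℕ →ᵇ ℝ))
    (hQ : ∀ s : ℕ →ᵇ ℝ, (∀ i, 0 ≤ s i) →
      ∀ i, IsLUB (Set.range fun k => (Γ^[k] s) i) (Q s i)) :
    ∀ q : ℕ →ᵇ ℝ, (∃ δ > (0 : ℝ), ∀ i, δ ≤ q i) → ∀ ε : ℝ, 0 < ε →
      ∃ m : ℕ, ∀ s : ℕ →ᵇ ℝ, (∀ i, 0 ≤ s i) → (∀ i, s i ≤ q i) →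
        ∀ i, (Finset.range (m + 1)).sup'
              (Finset.nonempty_range_iff.mpr (Nat.succ_ne_zero m)) (fun k => (Γ^[k] s) i)
            ≤ Q s i ∧
          Q s i ≤ (Finset.range (m + 1)).sup'
              (Finset.nonempty_range_iff.mpr (Nat.succ_ne_zero m)) (fun k => (Γ^[k] s) i)
            + ε := by
  intro q hq ε hε
  obtain ⟨δ, hδ, hδq⟩ := hq
  have hq0 : ∀ i, 0 ≤ q i := fun i => le_trans hδ.le (hδq i)
  have := (hattr q hq0).eventually (eventually_le_nhds hε)
  obtain ⟨m, hm⟩ := this.exists_forall_of_atTop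
  refine ⟨m, fun s hs0 hsq i => ?_⟩
  -- iterate monotonicity
  have hiter : ∀ k i, (Γ^[k] s) i ≤ (Γ^[k] q) i := by
    intro k
    induction k with
    | zero => simpa using hsq
    | succ n ih =>
      intro i
      rw [Function.iterate_succ_apply', Function.iterate_succ_apply']
      exact hmono _ _ ih i
  have hlub := hQ s hs0 i
  constructor
  · apply Finset.sup'_le
    intro k _
    exact hlub.1 ⟨k, rfl⟩
  · have hsup0 : (0:ℝ) ≤ (Finset.range (m + 1)).sup'
        (Finset.nonempty_range_iff.mpr (Nat.succ_ne_zero m)) (fun k => (Γ^[k] s) i) := by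
      have h0 : (Γ^[0] s) i ≤ _ := Finset.le_sup' (fun k => (Γ^[k] s) i)
        (Finset.mem_range.mpr (Nat.succ_pos m))
      exact le_trans (hs0 i) h0
    apply hlub.2
    rintro x ⟨k, rfl⟩
    by_cases hk : k ≤ m
    · exact le_add_of_le_of_nonneg
        (Finset.le_sup' (fun k => (Γ^[k] s) i) (Finset.mem_range.mpr (Nat.lt_succ_of_le hk))) hε.le
    · push_neg at hk
      have h1 : (Γ^[k] s) i ≤ (Γ^[k] q) i := hiter k i
      have h2 : (Γ^[k] q) i ≤ ‖Γ^[k] q‖ :=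
        le_trans (le_abs_self _) ((Γ^[k] q).norm_coe_le_norm i)
      have h3 : ‖Γ^[k] q‖ ≤ ε := hm k hk.le
      linarith
end

section
/- Let Γ be a max-type gain operator Γ(s) = (sup_j γ_{ij}(s_j))_{i∈ℕ} built from a family {γ_{ij}} of functions in 𝒦 ∪ {0}. Assume: (a) Γ is well-defined and continuous on ℓ∞⁺; (b) the induced system s(k+1) = Γ(s(k)) is uniformly globally stable, i.e. there exists σ ∈ 𝒦∞ with ‖Γᵏ(s)‖_{ℓ∞} ≤ σ(‖s‖_{ℓ∞}) for all k and s; (c) each trajectory converges to zero componentwise. Then for any s, b ∈ ℓ∞⁺, s ≤ Γ(s) ⊕ b implies ‖s‖_{ℓ∞} ≤ σ(‖b‖_{ℓ∞}) (the monotone bounded invertibility / implication property). -/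
/-!
Since `Γ` is monotone and max-preserving on `ℓ∞⁺`, applying `Γᵏ` to `s ≤ Γ(s) ⊕ b` gives
`Γᵏ(s) ≤ Γᵏ⁺¹(s) ⊕ Γᵏ(b)`, and uniform global stability bounds every `Γᵏ(b)` by `σ(‖b‖)`.
Hence `s ≤ Γᵏ(s) ⊕ σ(‖b‖)` for every `k`, and letting `k → ∞` with `Γᵏ(s) → 0` componentwise
gives `s ≤ σ(‖b‖)`. The suprema defining `Γ` are genuine (bounded) suprema because stability
applied to a unit vector bounds each gain: `γᵢⱼ(r) ≤ σ(r)`.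
-/

noncomputable def gainOp (γ : ℕ → ℕ → ℝ → ℝ) (s : ℕ → ℝ) : ℕ → ℝ :=
  fun i => ⨆ j, γ i j (s j)

open Set

section IterateSup

variable {α : Type*} [SemilatticeSup α] {T : α → α} {S : Set α}

theorem MonotoneOn.iterate_of_mapsTo (hmono : MonotoneOn T S) (hT : MapsTo T S S) (k : ℕ) :
    MonotoneOn T^[k] S := by
  induction k with
  | zero => exact monotoneOn_id
  | succ k ih =>
    rw [Function.iterate_succ']
    exact hmono.comp ih (hT.iterate k)

theorem iterate_sup_le_of_mapsTo (hT : MapsTo T S S) (hS : SupClosed S) (hmono : MonotoneOn T S)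
    (hsup : ∀ x ∈ S, ∀ y ∈ S, T (x ⊔ y) ≤ T x ⊔ T y) {x y : α} (hx : x ∈ S) (hy : y ∈ S)
    (k : ℕ) : T^[k] (x ⊔ y) ≤ T^[k] x ⊔ T^[k] y := by
  induction k with
  | zero => exact le_rfl
  | succ k ih =>
    have hxk := hT.iterate k hx
    have hyk := hT.iterate k hy
    simp only [Function.iterate_succ_apply']
    calc T (T^[k] (x ⊔ y)) ≤ T (T^[k] x ⊔ T^[k] y) :=
          hmono (hT.iterate k (hS hx hy)) (hS hxk hyk) ih
      _ ≤ T (T^[k] x) ⊔ T (T^[k] y) := hsup _ hxk _ hyk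

theorem le_iterate_sup_of_le_sup (hT : MapsTo T S S) (hS : SupClosed S)
    (hmono : MonotoneOn T S) (hsup : ∀ x ∈ S, ∀ y ∈ S, T (x ⊔ y) ≤ T x ⊔ T y)
    {s b c : α} (hs : s ∈ S) (hb : b ∈ S) (hsb : s ≤ T s ⊔ b) (hc : ∀ k, T^[k] b ≤ c)
    (k : ℕ) : s ≤ T^[k] s ⊔ c := by
  induction k with
  | zero => exact le_sup_left
  | succ k ih =>
    have hstep : T^[k] s ≤ T^[k + 1] s ⊔ c :=
      calc T^[k] s ≤ T^[k] (T s ⊔ b) :=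
            hmono.iterate_of_mapsTo hT k hs (hS (hT hs) hb) hsb
        _ ≤ T^[k] (T s) ⊔ T^[k] b := iterate_sup_le_of_mapsTo hT hS hmono hsup (hT hs) hb k
        _ ≤ T^[k + 1] s ⊔ c := sup_le_sup_left (hc k) _
    exact ih.trans (sup_le hstep le_sup_right)

end IterateSup

def boundedNonneg : Set (ℕ → ℝ) := {x | 0 ≤ x ∧ BddAbove (range x)}

theorem supClosed_boundedNonneg : SupClosed boundedNonneg := fun _ hx _ hy =>
  ⟨hx.1.trans le_sup_left, bbdAbove_range_sup hx.2 hy.2⟩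

theorem le_iSup_abs_of_mem_boundedNonneg {x : ℕ → ℝ} (hx : x ∈ boundedNonneg) (i : ℕ) :
    x i ≤ ⨆ i, |x i| := by
  have habs : (fun i => |x i|) = x := funext fun i => abs_of_nonneg (hx.1 i)
  rw [habs]
  exact le_ciSup hx.2 i

theorem gainOp_nonneg {γ : ℕ → ℕ → ℝ → ℝ} (hγ0 : ∀ i j, γ i j 0 = 0)
    (hγ : ∀ i j, MonotoneOn (γ i j) (Ici 0)) {x : ℕ → ℝ} (hx : 0 ≤ x) : 0 ≤ gainOp γ x :=
  fun i => Real.iSup_nonneg fun j => hγ0 i j ▸ hγ i j self_mem_Ici (hx j) (hx j)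

theorem gain_le_of_iSup_abs_gainOp_le {γ : ℕ → ℕ → ℝ → ℝ} (hγ0 : ∀ i j, γ i j 0 = 0)
    (hγ : ∀ i j, MonotoneOn (γ i j) (Ici 0))
    (hwd : ∀ s : ℕ → ℝ, 0 ≤ s → BddAbove (range s) → BddAbove (range (gainOp γ s)))
    {σ : ℝ → ℝ} (hσ : ∀ s : ℕ → ℝ, 0 ≤ s → BddAbove (range s) →
      (⨆ i, |gainOp γ s i|) ≤ σ (⨆ i, |s i|))
    (i j : ℕ) {r : ℝ} (hr : 0 ≤ r) : γ i j r ≤ σ r := by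
  have hsingle_le : ∀ {a : ℝ}, 0 ≤ a → ∀ m, (Pi.single j a : ℕ → ℝ) m ≤ a := fun ha m => by
    rcases eq_or_ne m j with rfl | hm
    · simp
    · simpa [hm] using ha
  have he : Pi.single j r ∈ boundedNonneg :=
    ⟨Pi.single_nonneg.2 hr, ⟨r, forall_mem_range.2 (hsingle_le hr)⟩⟩
  have hnorm : (⨆ m, |Pi.single j r m|) = r := by
    refine le_antisymm (ciSup_le fun m => ?_) ?_
    · exact (abs_of_nonneg (he.1 m)).trans_le (hsingle_le hr m)
    · simpa using le_iSup_abs_of_mem_boundedNonneg he j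
  have hrow : (fun j' => γ i j' ((Pi.single j r : ℕ → ℝ) j')) = Pi.single j (γ i j r) :=
    funext fun j' => Pi.apply_single (γ i) (hγ0 i) j r j'
  have hγr : 0 ≤ γ i j r := hγ0 i j ▸ hγ i j self_mem_Ici hr hr
  have hΓe : gainOp γ (Pi.single j r) ∈ boundedNonneg :=
    ⟨gainOp_nonneg hγ0 hγ he.1, hwd _ he.1 he.2⟩
  calc γ i j r = (Pi.single j (γ i j r) : ℕ → ℝ) j := by rw [Pi.single_eq_same]
    _ ≤ gainOp γ (Pi.single j r) i := by
        rw [gainOp, hrow]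
        exact le_ciSup ⟨_, forall_mem_range.2 (hsingle_le hγr)⟩ j
    _ ≤ ⨆ i, |gainOp γ (Pi.single j r) i| := le_iSup_abs_of_mem_boundedNonneg hΓe i
    _ ≤ σ r := (hσ _ he.1 he.2).trans_eq (congrArg σ hnorm)

structure IsGainFamily (γ : ℕ → ℕ → ℝ → ℝ) : Prop where
  map_zero : ∀ i j, γ i j 0 = 0
  monotoneOn : ∀ i j, MonotoneOn (γ i j) (Ici 0)
  bddAbove_row : ∀ i r, 0 ≤ r → BddAbove (range fun j => γ i j r)

namespace IsGainFamily

variable {γ : ℕ → ℕ → ℝ → ℝ}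

theorem bddAbove_range_apply (hγ : IsGainFamily γ) {x : ℕ → ℝ} (hx : x ∈ boundedNonneg)
    (i : ℕ) : BddAbove (range fun j => γ i j (x j)) := by
  obtain ⟨C, hC⟩ := hx.2
  have hxC : ∀ j, x j ≤ C := fun j => hC (mem_range_self j)
  obtain ⟨B, hB⟩ := hγ.bddAbove_row i C ((hx.1 0).trans (hxC 0))
  refine ⟨B, forall_mem_range.2 fun j => ?_⟩
  exact (hγ.monotoneOn i j (hx.1 j) ((hx.1 j).trans (hxC j)) (hxC j)).trans
    (hB (mem_range_self j))

theorem le_gainOp (hγ : IsGainFamily γ) {x : ℕ → ℝ} (hx : x ∈ boundedNonneg) (i j : ℕ) :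
    γ i j (x j) ≤ gainOp γ x i :=
  le_ciSup (hγ.bddAbove_range_apply hx i) j

theorem monotoneOn_gainOp (hγ : IsGainFamily γ) : MonotoneOn (gainOp γ) boundedNonneg :=
  fun _ hx _ hy hxy i => ciSup_le fun j =>
    (hγ.monotoneOn i j (hx.1 j) (hy.1 j) (hxy j)).trans (hγ.le_gainOp hy i j)

theorem gainOp_sup_le (hγ : IsGainFamily γ) {x y : ℕ → ℝ} (hx : x ∈ boundedNonneg)
    (hy : y ∈ boundedNonneg) : gainOp γ (x ⊔ y) ≤ gainOp γ x ⊔ gainOp γ y := fun i =>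
  ciSup_le fun j => by
    rw [Pi.sup_apply, (hγ.monotoneOn i j).map_max (hx.1 j) (hy.1 j)]
    exact max_le_max (hγ.le_gainOp hx i j) (hγ.le_gainOp hy i j)

theorem mapsTo_gainOp (hγ : IsGainFamily γ)
    (hwd : ∀ s : ℕ → ℝ, 0 ≤ s → BddAbove (range s) → BddAbove (range (gainOp γ s))) :
    MapsTo (gainOp γ) boundedNonneg boundedNonneg := fun _ hx =>
  ⟨gainOp_nonneg hγ.map_zero hγ.monotoneOn hx.1, hwd _ hx.1 hx.2⟩

end IsGainFamily

theorem stmt10_general (γ : ℕ → ℕ → ℝ → ℝ)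
    (hγ : ∀ i j, γ i j = 0 ∨ (γ i j 0 = 0 ∧ StrictMonoOn (γ i j) (Set.Ici 0) ∧
      ContinuousOn (γ i j) (Set.Ici 0) ∧ ∀ r : ℝ, 0 ≤ r → 0 ≤ γ i j r))
    (hwd : ∀ s : ℕ → ℝ, 0 ≤ s → BddAbove (Set.range s) →
      BddAbove (Set.range (gainOp γ s)))
    (σ : ℝ → ℝ)
    (hUGS : ∀ s : ℕ → ℝ, 0 ≤ s → BddAbove (Set.range s) →
      ∀ k : ℕ, (⨆ i, |(gainOp γ)^[k] s i|) ≤ σ (⨆ i, |s i|))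
    (hcomp : ∀ s : ℕ → ℝ, 0 ≤ s → BddAbove (Set.range s) →
      ∀ i, Filter.Tendsto (fun k => (gainOp γ)^[k] s i) Filter.atTop (nhds 0)) :
    ∀ s b : ℕ → ℝ, 0 ≤ s → BddAbove (Set.range s) → 0 ≤ b → BddAbove (Set.range b) →
      s ≤ gainOp γ s ⊔ b → (⨆ i, |s i|) ≤ σ (⨆ i, |b i|) := by
  intro s b hs hsb hb hbb hle
  have hγ0 : ∀ i j, γ i j 0 = 0 := fun i j => (hγ i j).elim (fun h => by simp [h]) (·.1)
  have hγmono : ∀ i j, MonotoneOn (γ i j) (Ici 0) := fun i j =>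
    (hγ i j).elim (fun h => by rw [h]; exact monotoneOn_const) (·.2.1.monotoneOn)
  have hgain : IsGainFamily γ := ⟨hγ0, hγmono, fun i r hr =>
    ⟨σ r, forall_mem_range.2 fun j =>
      gain_le_of_iSup_abs_gainOp_le hγ0 hγmono hwd (fun x hx hxb => hUGS x hx hxb 1) i j hr⟩⟩
  have hΓ := hgain.mapsTo_gainOp hwd
  set M := σ (⨆ i, |b i|)
  have hbM : ∀ k, (gainOp γ)^[k] b ≤ fun _ => M := fun k i =>
    (le_iSup_abs_of_mem_boundedNonneg (hΓ.iterate k ⟨hb, hbb⟩) i).trans (hUGS b hb hbb k)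
  have hsM := le_iterate_sup_of_le_sup hΓ supClosed_boundedNonneg hgain.monotoneOn_gainOp
    (fun _ hx _ hy => hgain.gainOp_sup_le hx hy) ⟨hs, hsb⟩ ⟨hb, hbb⟩ hle hbM
  have hM : 0 ≤ M := (Real.iSup_nonneg fun i => abs_nonneg (b i)).trans (hUGS b hb hbb 0)
  refine ciSup_le fun i => (abs_of_nonneg (hs i)).trans_le ?_
  have hlim := ge_of_tendsto' ((hcomp s hs hsb i).max tendsto_const_nhds) fun k => hsM k i
  rwa [max_eq_right hM] at hlim

/-- For a well-defined continuous max-type gain operator `Γ` built from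
gains in `𝒦 ∪ {0}`, if the induced system is uniformly globally stable with
`σ ∈ 𝒦∞` and each trajectory converges to zero componentwise, then
`s ≤ Γ(s) ⊕ b` implies `‖s‖ ≤ σ(‖b‖)`. -/
theorem stmt10 (γ : ℕ → ℕ → ℝ → ℝ)
    (hγ : ∀ i j, γ i j = 0 ∨ (γ i j 0 = 0 ∧ StrictMonoOn (γ i j) (Set.Ici 0) ∧
      ContinuousOn (γ i j) (Set.Ici 0) ∧ ∀ r : ℝ, 0 ≤ r → 0 ≤ γ i j r))
    (hwd : ∀ s : ℕ → ℝ, 0 ≤ s → BddAbove (Set.range s) →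
      BddAbove (Set.range (gainOp γ s)))
    (hcont : ∀ s : ℕ → ℝ, 0 ≤ s → BddAbove (Set.range s) → ∀ ε : ℝ, 0 < ε →
      ∃ δ > (0 : ℝ), ∀ t : ℕ → ℝ, 0 ≤ t → BddAbove (Set.range t) →
        (⨆ i, |s i - t i|) ≤ δ → (⨆ i, |gainOp γ s i - gainOp γ t i|) ≤ ε)
    (σ : ℝ → ℝ) (hσ0 : σ 0 = 0) (hσmono : StrictMonoOn σ (Set.Ici 0))
    (hσcont : ContinuousOn σ (Set.Ici 0))
    (hσunb : Filter.Tendsto σ Filter.atTop Filter.atTop)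
    (hUGS : ∀ s : ℕ → ℝ, 0 ≤ s → BddAbove (Set.range s) →
      ∀ k : ℕ, (⨆ i, |(gainOp γ)^[k] s i|) ≤ σ (⨆ i, |s i|))
    (hcomp : ∀ s : ℕ → ℝ, 0 ≤ s → BddAbove (Set.range s) →
      ∀ i, Filter.Tendsto (fun k => (gainOp γ)^[k] s i) Filter.atTop (nhds 0)) :
    ∀ s b : ℕ → ℝ, 0 ≤ s → BddAbove (Set.range s) → 0 ≤ b → BddAbove (Set.range b) →
      s ≤ gainOp γ s ⊔ b → (⨆ i, |s i|) ≤ σ (⨆ i, |b i|) :=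
  stmt10_general γ hγ hwd σ hUGS hcomp
end

section
/- Suppose ρ ∈ 𝒦∞ and ρ₁, ρ₂ ∈ 𝒦∞ satisfy id + ρ = (id + ρ₁) ∘ (id + ρ₂). Let Γ : ℓ∞⁺ → ℓ∞⁺ be a monotone operator, ω ∈ 𝒦∞ with ω < id, and for i, j ∈ ℕ define Γ_{ij}(s) := Γ(s) ⊕ ω(s_j)e_i. If (id + ρ) ∘ Γ_{ij}(s) ≱ s for all s ∈ ℓ∞⁺ \ {0} and all i, j, then also (id + ρ₁) ∘ ((id + ρ₂) ∘ Γ(s) ⊕ ω(s_j)e_i) ≱ s for all s ∈ ℓ∞⁺ \ {0} and all i, j. In particular the operator Γ_{ρ₂} := (id + ρ₂) ∘ Γ satisfies the max-robust strong small-gain condition with the gain ρ₁. -/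
/-- If `id + ρ = (id + ρ₁) ∘ (id + ρ₂)` with `ρ, ρ₁, ρ₂ ∈ 𝒦∞`,
`ω ∈ 𝒦∞` with `ω < id`, and the operators `Γ_{ij}(s) = Γ(s) ⊕ ω(s_j)e_i` satisfy
`(id + ρ) ∘ Γ_{ij}(s) ≱ s` for all nonzero `s ≥ 0` and all `i,j`, then also
`(id + ρ₁) ∘ ((id + ρ₂) ∘ Γ(s) ⊕ ω(s_j)e_i) ≱ s` for all nonzero `s ≥ 0` and all
`i,j`; i.e. `Γ_{ρ₂} = (id + ρ₂) ∘ Γ` satisfies the max-robust strong small-gain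
condition with gain `ρ₁`. -/
theorem stmt11 (ρ ρ₁ ρ₂ ω : ℝ → ℝ)
    (hρ : ρ 0 = 0 ∧ StrictMonoOn ρ (Set.Ici 0) ∧ ContinuousOn ρ (Set.Ici 0) ∧
      Filter.Tendsto ρ Filter.atTop Filter.atTop)
    (hρ₁ : ρ₁ 0 = 0 ∧ StrictMonoOn ρ₁ (Set.Ici 0) ∧ ContinuousOn ρ₁ (Set.Ici 0) ∧
      Filter.Tendsto ρ₁ Filter.atTop Filter.atTop)
    (hρ₂ : ρ₂ 0 = 0 ∧ StrictMonoOn ρ₂ (Set.Ici 0) ∧ ContinuousOn ρ₂ (Set.Ici 0) ∧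
      Filter.Tendsto ρ₂ Filter.atTop Filter.atTop)
    (hω : ω 0 = 0 ∧ StrictMonoOn ω (Set.Ici 0) ∧ ContinuousOn ω (Set.Ici 0) ∧
      Filter.Tendsto ω Filter.atTop Filter.atTop)
    (hωid : ∀ r : ℝ, 0 < r → ω r < r)
    (hcomp : ∀ r : ℝ, 0 ≤ r → r + ρ r = (r + ρ₂ r) + ρ₁ (r + ρ₂ r))
    (Γ : (ℕ → ℝ) → (ℕ → ℝ)) (hmono : Monotone Γ)
    (hΓpos : ∀ s : ℕ → ℝ, 0 ≤ s → 0 ≤ Γ s)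
    (hsgc : ∀ (i j : ℕ) (s : ℕ → ℝ), 0 ≤ s → s ≠ 0 →
      ¬ (s ≤ fun m => (Γ s ⊔ Pi.single i (ω (s j))) m
          + ρ ((Γ s ⊔ Pi.single i (ω (s j))) m))) :
    ∀ (i j : ℕ) (s : ℕ → ℝ), 0 ≤ s → s ≠ 0 →
      ¬ (s ≤ fun m => ((fun m' => Γ s m' + ρ₂ (Γ s m')) ⊔ Pi.single i (ω (s j))) m
          + ρ₁ (((fun m' => Γ s m' + ρ₂ (Γ s m')) ⊔ Pi.single i (ω (s j))) m)) := by
  obtain ⟨hρ0, hρm, -, -⟩ := hρ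
  obtain ⟨hρ₁0, hρ₁m, -, -⟩ := hρ₁
  obtain ⟨hρ₂0, hρ₂m, -, -⟩ := hρ₂
  obtain ⟨hω0, hωm, -, -⟩ := hω
  have nonneg : ∀ f : ℝ → ℝ, f 0 = 0 → StrictMonoOn f (Set.Ici 0) →
      ∀ r : ℝ, 0 ≤ r → 0 ≤ f r := by
    intro f h0 hm r hr
    rcases eq_or_lt_of_le hr with h | h
    · simp [← h, h0]
    · have := hm (Set.mem_Ici.mpr le_rfl) (Set.mem_Ici.mpr hr) h
      linarith [h0 ▸ this]
  have addmono : ∀ f : ℝ → ℝ, f 0 = 0 → StrictMonoOn f (Set.Ici 0) →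
      ∀ x y : ℝ, 0 ≤ x → x ≤ y → x + f x ≤ y + f y := by
    intro f h0 hm x y hx hxy
    rcases eq_or_lt_of_le hxy with h | h
    · rw [h]
    · have := hm (Set.mem_Ici.mpr hx) (Set.mem_Ici.mpr (hx.trans hxy)) h
      linarith
  intro i j s hs hne hle
  apply hsgc i j s hs hne
  intro m
  refine (hle m).trans ?_
  simp only [Pi.sup_apply]
  set a := Γ s m with ha_def
  have ha : 0 ≤ a := hΓpos s hs m
  set b := (Pi.single i (ω (s j)) : ℕ → ℝ) m with hb_def
  have hb : 0 ≤ b := by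
    rw [hb_def, Pi.single_apply]
    split
    · exact nonneg ω hω0 hωm _ (hs j)
    · exact le_rfl
  set c := a ⊔ b with hc_def
  have hc : 0 ≤ c := ha.trans le_sup_left
  have hy : 0 ≤ ρ₂ c := nonneg ρ₂ hρ₂0 hρ₂m c hc
  have hxy : (a + ρ₂ a) ⊔ b ≤ c + ρ₂ c := by
    refine sup_le (addmono ρ₂ hρ₂0 hρ₂m a c ha le_sup_left) ?_
    calc b ≤ c := le_sup_right
    _ ≤ c + ρ₂ c := le_add_of_nonneg_right hy
  have hx : 0 ≤ (a + ρ₂ a) ⊔ b := hb.trans le_sup_right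
  rw [hcomp c hc]
  exact addmono ρ₁ hρ₁0 hρ₁m _ _ hx hxy
end

section
/- Let Γ : ℓ∞⁺ → ℓ∞⁺ be a monotone operator that is uniformly globally stable (there is σ ∈ 𝒦∞ with ‖Γᵏ(s)‖ ≤ σ(‖s‖) for all k, s) and globally weakly attractive on points of decay (inf_{k≥0} ‖Γᵏ(s)‖ = 0 whenever Γ(s) ≤ s). Suppose moreover that for every r > 0 there is a point of decay q_r with r·𝟙 ≤ q_r and ‖q_r‖ ≤ σ(r). Then Γ is uniformly globally weakly attractive: for every r > 0, inf_{k≥0} sup_{‖s‖≤r, s∈ℓ∞⁺} ‖Γᵏ(s)‖ = 0. -/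
open scoped BoundedContinuousFunction

/-- A monotone operator `Γ` on the positive cone of `ℓ∞` (modeled as
`ℕ →ᵇ ℝ`) that is uniformly globally stable (with `σ ∈ 𝒦∞`) and globally weakly
attractive on points of decay, and for which every `r > 0` admits a point of decay
`q_r ≥ r·𝟙` with `‖q_r‖ ≤ σ(r)`, is uniformly globally weakly attractive:
`inf_k sup_{‖s‖ ≤ r, s ≥ 0} ‖Γᵏ(s)‖ = 0` for every `r > 0`. -/
theorem stmt14 (Γ : (ℕ →ᵇ ℝ) → (ℕ →ᵇ ℝ))
    (hmono : ∀ s t : ℕ →ᵇ ℝ, (∀ i, s i ≤ t i) → ∀ i, Γ s i ≤ Γ t i)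
    (hpos : ∀ s : ℕ →ᵇ ℝ, (∀ i, 0 ≤ s i) → ∀ i, 0 ≤ Γ s i)
    (σ : ℝ → ℝ) (hσ0 : σ 0 = 0) (hσmono : StrictMonoOn σ (Set.Ici 0))
    (hσcont : ContinuousOn σ (Set.Ici 0))
    (hσunb : Filter.Tendsto σ Filter.atTop Filter.atTop)
    (hUGS : ∀ s : ℕ →ᵇ ℝ, (∀ i, 0 ≤ s i) → ∀ k : ℕ, ‖Γ^[k] s‖ ≤ σ ‖s‖)
    (hweak : ∀ s : ℕ →ᵇ ℝ, (∀ i, 0 ≤ s i) → (∀ i, Γ s i ≤ s i) →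
      (⨅ k : ℕ, ‖Γ^[k] s‖) = 0)
    (hq : ∀ r : ℝ, 0 < r → ∃ q : ℕ →ᵇ ℝ, (∀ i, 0 ≤ q i) ∧ (∀ i, Γ q i ≤ q i) ∧
      (∀ i, r ≤ q i) ∧ ‖q‖ ≤ σ r) :
    ∀ r : ℝ, 0 < r →
      (⨅ k : ℕ, ⨆ s ∈ {s : ℕ →ᵇ ℝ | (∀ i, 0 ≤ s i) ∧ ‖s‖ ≤ r}, ‖Γ^[k] s‖) = 0 := by

  intro r hr
  obtain ⟨q, hq0, hqdec, hqge, hqσ⟩ := hq r hr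
  -- pointwise facts about iterates
  have hiterpos : ∀ (k : ℕ) (s : ℕ →ᵇ ℝ), (∀ i, 0 ≤ s i) → ∀ i, 0 ≤ Γ^[k] s i := by
    intro k
    induction k with
    | zero => intro s hs i; simpa using hs i
    | succ k ih =>
      intro s hs i
      rw [Function.iterate_succ_apply]
      exact ih (Γ s) (hpos s hs) i
  have hitermono : ∀ (k : ℕ) (s t : ℕ →ᵇ ℝ), (∀ i, s i ≤ t i) →
      ∀ i, Γ^[k] s i ≤ Γ^[k] t i := by
    intro k
    induction k with
    | zero => intro s t hst i; simpa using hst i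
    | succ k ih =>
      intro s t hst i
      rw [Function.iterate_succ_apply, Function.iterate_succ_apply]
      exact ih (Γ s) (Γ t) (hmono s t hst) i
  -- norm comparison
  have hnormle : ∀ (k : ℕ) (s : ℕ →ᵇ ℝ), s ∈ {s : ℕ →ᵇ ℝ | (∀ i, 0 ≤ s i) ∧ ‖s‖ ≤ r} →
      ‖Γ^[k] s‖ ≤ ‖Γ^[k] q‖ := by
    intro k s hs
    obtain ⟨hs0, hsr⟩ := hs
    have hsq : ∀ i, s i ≤ q i := fun i =>
      le_trans (le_trans (le_abs_self _) ((Γ^[0] s).norm_coe_le_norm i |>.trans (by simpa using hsr) |> fun h => h)) (hqge i)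
    apply BoundedContinuousFunction.norm_le (norm_nonneg _) |>.2
    intro i
    rw [Real.norm_eq_abs, abs_of_nonneg (hiterpos k s hs0 i)]
    exact le_trans (hitermono k s q hsq i)
      (le_trans (le_abs_self _) ((Γ^[k] q).norm_coe_le_norm i))
  set S := {s : ℕ →ᵇ ℝ | (∀ i, 0 ≤ s i) ∧ ‖s‖ ≤ r}
  have hsupnn : ∀ k : ℕ, 0 ≤ ⨆ s ∈ S, ‖Γ^[k] s‖ := by
    intro k
    apply Real.iSup_nonneg
    intro s
    apply Real.iSup_nonneg
    intro _
    exact norm_nonneg _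
  have hsuple : ∀ k : ℕ, (⨆ s ∈ S, ‖Γ^[k] s‖) ≤ ‖Γ^[k] q‖ := by
    intro k
    apply Real.iSup_le _ (norm_nonneg _)
    intro s
    apply Real.iSup_le _ (norm_nonneg _)
    intro hs
    exact hnormle k s hs
  have hbdd : BddBelow (Set.range fun k : ℕ => ⨆ s ∈ S, ‖Γ^[k] s‖) := by
    refine ⟨0, ?_⟩
    rintro x ⟨k, rfl⟩
    exact hsupnn k
  have h1 : (⨅ k : ℕ, ⨆ s ∈ S, ‖Γ^[k] s‖) ≤ ⨅ k : ℕ, ‖Γ^[k] q‖ :=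
    ciInf_mono hbdd hsuple
  have h2 : (⨅ k : ℕ, ‖Γ^[k] q‖) = 0 := hweak q hq0 hqdec
  have h3 : 0 ≤ ⨅ k : ℕ, ⨆ s ∈ S, ‖Γ^[k] s‖ := le_ciInf hsupnn
  exact le_antisymm (h2 ▸ h1) h3
end

section
/- Suppose {γ_{ij} : i,j ∈ ℕ} ⊂ 𝒦 ∪ {0} and there exist N ∈ ℕ, a map p : ℕ → {1,…,N}, and virtual gains γ̄_{kl} ∈ 𝒦 ∪ {0} (1 ≤ k,l ≤ N) with γ_{ij} ≤ γ̄_{p(i)p(j)} pointwise for all i, j ∈ ℕ. Then for all k ∈ ℕ, s ∈ ℓ∞⁺ and i ∈ ℕ: Γᵏᵢ(s) ≤ Γ̄ᵏ_{p(i)}(‖s‖_{ℓ∞}·𝟙_N), where Γ is the infinite gain operator, Γ̄ is the finite-dimensional operator Γ̄(t) = (max_{1≤l≤N} γ̄_{kl}(t_l))_{1≤k≤N} on ℝ₊^N, and 𝟙_N = (1,…,1) ∈ ℝ₊^N. -/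
/-- The finite-dimensional virtual gain operator on `ℝ₊^N`. -/
noncomputable def virtGainOp {N : ℕ} (γb : Fin N → Fin N → ℝ → ℝ)
    (t : Fin N → ℝ) : Fin N → ℝ :=
  fun k => ⨆ l, γb k l (t l)

/-- If the infinite family of gains is dominated by virtual gains via a
map `p : ℕ → {1,…,N}` (`γ_{ij} ≤ γ̄_{p(i)p(j)}`), then the iterates of the infinite
gain operator are dominated by the iterates of the finite virtual gain operator:
`Γᵏᵢ(s) ≤ Γ̄ᵏ_{p(i)}(‖s‖·𝟙_N)`. -/
theorem stmt17 (γ : ℕ → ℕ → ℝ → ℝ) (N : ℕ) (hN : 0 < N) (p : ℕ → Fin N)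
    (γb : Fin N → Fin N → ℝ → ℝ)
    (hγ : ∀ i j, γ i j = 0 ∨ (γ i j 0 = 0 ∧ StrictMonoOn (γ i j) (Set.Ici 0) ∧
      ContinuousOn (γ i j) (Set.Ici 0) ∧ ∀ r : ℝ, 0 ≤ r → 0 ≤ γ i j r))
    (hγb : ∀ k l, γb k l = 0 ∨ (γb k l 0 = 0 ∧ StrictMonoOn (γb k l) (Set.Ici 0) ∧
      ContinuousOn (γb k l) (Set.Ici 0) ∧ ∀ r : ℝ, 0 ≤ r → 0 ≤ γb k l r))
    (hdom : ∀ i j, ∀ r : ℝ, 0 ≤ r → γ i j r ≤ γb (p i) (p j) r)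
    (s : ℕ → ℝ) (hs : 0 ≤ s) (hbdd : BddAbove (Set.range s)) :
    ∀ (k : ℕ) (i : ℕ),
      (gainOp γ)^[k] s i ≤ (virtGainOp γb)^[k] (fun _ => ⨆ m, s m) (p i) := by
  have hne : Nonempty (Fin N) := ⟨⟨0, hN⟩⟩
  set t : Fin N → ℝ := fun _ => ⨆ m, s m with ht
  -- basic properties of the gains
  have hγnn : ∀ i j r, 0 ≤ r → 0 ≤ γ i j r := by
    intro i j r hr
    rcases hγ i j with h | h
    · simp [h]
    · exact h.2.2.2 r hr
  have hγbnn : ∀ k l r, 0 ≤ r → 0 ≤ γb k l r := by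
    intro k l r hr
    rcases hγb k l with h | h
    · simp [h]
    · exact h.2.2.2 r hr
  have hγbmono : ∀ k l, MonotoneOn (γb k l) (Set.Ici 0) := by
    intro k l
    rcases hγb k l with h | h
    · simp [h]; exact monotoneOn_const
    · exact h.2.1.monotoneOn
  -- strengthened induction
  suffices H : ∀ k : ℕ, (∀ i, 0 ≤ (gainOp γ)^[k] s i) ∧
      (∀ l, 0 ≤ (virtGainOp γb)^[k] t l) ∧
      (∀ i, (gainOp γ)^[k] s i ≤ (virtGainOp γb)^[k] t (p i)) by
    intro k i; exact (H k).2.2 i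
  intro k
  induction k with
  | zero =>
    refine ⟨fun i => hs i, fun l => ?_, fun i => ?_⟩
    · exact le_trans (hs 0) (le_ciSup hbdd 0)
    · exact le_ciSup hbdd i
  | succ k ih =>
    obtain ⟨hu, hv, hle⟩ := ih
    set u := (gainOp γ)^[k] s with hudef
    set v := (virtGainOp γb)^[k] t with hvdef
    -- key pointwise bound
    have key : ∀ i j, γ i j (u j) ≤ ⨆ l, γb (p i) l (v l) := by
      intro i j
      have h1 : γ i j (u j) ≤ γb (p i) (p j) (u j) := hdom i j _ (hu j)
      have h2 : γb (p i) (p j) (u j) ≤ γb (p i) (p j) (v (p j)) :=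
        hγbmono (p i) (p j) (hu j) (hv (p j)) (hle j)
      have h3 : γb (p i) (p j) (v (p j)) ≤ ⨆ l, γb (p i) l (v l) :=
        le_ciSup (f := fun l => γb (p i) l (v l))
          (Set.Finite.bddAbove (Set.finite_range _)) (p j)
      exact le_trans h1 (le_trans h2 h3)
    have hbddrange : ∀ i, BddAbove (Set.range fun j => γ i j (u j)) := by
      intro i
      exact ⟨⨆ l, γb (p i) l (v l), by rintro x ⟨j, rfl⟩; exact key i j⟩
    have hstep : ∀ i, (gainOp γ)^[k+1] s i = ⨆ j, γ i j (u j) := by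
      intro i
      rw [Function.iterate_succ_apply']
      rfl
    have hstepv : ∀ l, (virtGainOp γb)^[k+1] t l = ⨆ l', γb l l' (v l') := by
      intro l
      rw [Function.iterate_succ_apply']
      rfl
    refine ⟨fun i => ?_, fun l => ?_, fun i => ?_⟩
    · rw [hstep i]
      exact le_trans (hγnn i 0 (u 0) (hu 0)) (le_ciSup (hbddrange i) 0)
    · rw [hstepv l]
      have z : Fin N := ⟨0, hN⟩
      exact le_trans (hγbnn l z (v z) (hv z))
        (le_ciSup (f := fun l' => γb l l' (v l'))
          (Set.Finite.bddAbove (Set.finite_range _)) z)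
    · rw [hstep i, hstepv (p i)]
      exact ciSup_le (fun j => key i j)
end

section
/- Consider the cascade gain structure: γ_{(k+1)k} := 0 if k is a power of 2 and γ_{(k+1)k} := k/(k+1) (as a linear function r ↦ (k/(k+1))·r) otherwise, with all other gains zero. Then for every k ≥ 1, the component of Γ^{2^{k−1}−1}(𝟙) with index 2ᵏ equals the product ∏_{m=2^{k−1}+1}^{2^k−1} m/(m+1) = (2^{k−1}+1)/2ᵏ ≥ 1/2. Consequently Γⁿ(𝟙) does not converge to 0 in ℓ∞-norm, i.e. the induced discrete-time system is not uniformly globally asymptotically stable. -/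
open scoped Classical

/-- The linear cascade gain coefficient: `γ_{k+1,k} = 0` if `k` is a power of `2`,
and `γ_{k+1,k}(r) = (k/(k+1))·r` otherwise; `gainC k` is the coefficient `k/(k+1)`
(or `0`). -/
noncomputable def gainC (k : ℕ) : ℝ :=
  if ∃ m : ℕ, k = 2 ^ m then 0 else (k : ℝ) / (k + 1)

/-- The induced cascade gain operator: `Γᵢ(s) = γ_{i,i-1}(s_{i-1})` for `i ≥ 2`,
and `Γᵢ(s) = 0` for `i ≤ 1`. -/
noncomputable def cascadeGamma (s : ℕ → ℝ) : ℕ → ℝ :=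
  fun i => if i ≤ 1 then 0 else gainC (i - 1) * s (i - 1)

/-!
Iterating `Γ` shifts a sequence to the right while multiplying it by the gains it passes, so
`Γⁿ(𝟙)` at index `i + n` is the product of the gains on `[i, i + n)`. Between two consecutive
powers of two no gain vanishes, and `∏ j/(j+1)` over `[2ᵐ + 1, 2ᵐ⁺¹)` telescopes to
`(2ᵐ + 1)/2ᵐ⁺¹ ≥ 1/2`. Since all gains lie in `[0, 1]`, `‖Γⁿ(𝟙)‖∞` is finite, and it is at
least `1/2` for the unbounded sequence of times `n = 2ᵐ - 1`.
-/

theorem Finset.prod_Ico_div_succ {K : Type*} [Field K] [CharZero K] {b c : ℕ} (hb : 0 < b)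
    (hbc : b ≤ c) : ∏ j ∈ Finset.Ico b c, ((j : K) / (j + 1)) = b / c := by
  induction c, hbc using Nat.le_induction with
  | base => simp [hb.ne']
  | succ c hbc ih =>
    have hc : (c : K) ≠ 0 := by exact_mod_cast (hb.trans_le hbc).ne'
    rw [Finset.prod_Ico_succ_top hbc, ih, Nat.cast_succ]
    field_simp

lemma gainC_nonneg (k : ℕ) : 0 ≤ gainC k := by
  unfold gainC
  split_ifs <;> positivity

lemma gainC_le_one (k : ℕ) : gainC k ≤ 1 := by
  unfold gainC
  split_ifs
  · exact zero_le_one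
  · rw [div_le_one (by positivity)]
    linarith

lemma gainC_of_lt_of_lt {m j : ℕ} (h₁ : 2 ^ m < j) (h₂ : j < 2 ^ (m + 1)) :
    gainC j = j / (j + 1) := by
  rw [gainC, if_neg]
  rintro ⟨p, rfl⟩
  have hmp := (Nat.pow_lt_pow_iff_right (by norm_num)).mp h₁
  have hpm := (Nat.pow_lt_pow_iff_right (by norm_num)).mp h₂
  omega

lemma cascadeGamma_apply_succ (s : ℕ → ℝ) {i : ℕ} (hi : 1 ≤ i) :
    cascadeGamma s (i + 1) = gainC i * s i := by
  rw [cascadeGamma, if_neg (by omega), Nat.add_sub_cancel]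

lemma iterate_cascadeGamma_apply_add (n : ℕ) (s : ℕ → ℝ) {i : ℕ} (hi : 1 ≤ i) :
    cascadeGamma^[n] s (i + n) = (∏ j ∈ Finset.Ico i (i + n), gainC j) * s i := by
  induction n generalizing s i with
  | zero => simp
  | succ n ih =>
    rw [Function.iterate_succ_apply, ← add_assoc, add_right_comm, ih _ (by omega),
      cascadeGamma_apply_succ _ hi, Finset.prod_eq_prod_Ico_succ_bot (a := i) (by omega),
      add_right_comm]
    ring

lemma abs_cascadeGamma_le {s : ℕ → ℝ} {C : ℝ} (hs : ∀ i, |s i| ≤ C) (i : ℕ) :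
    |cascadeGamma s i| ≤ C := by
  unfold cascadeGamma
  split_ifs
  · simpa using (abs_nonneg _).trans (hs 0)
  · rw [abs_mul, abs_of_nonneg (gainC_nonneg _)]
    exact (mul_le_of_le_one_left (abs_nonneg _) (gainC_le_one _)).trans (hs _)

lemma abs_iterate_cascadeGamma_le {s : ℕ → ℝ} {C : ℝ} (hs : ∀ i, |s i| ≤ C) (n i : ℕ) :
    |cascadeGamma^[n] s i| ≤ C := by
  induction n generalizing i with
  | zero => exact hs i
  | succ n ih =>
    rw [Function.iterate_succ_apply']
    exact abs_cascadeGamma_le ih i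

lemma iterate_cascadeGamma_one_two_pow (m : ℕ) :
    cascadeGamma^[2 ^ m - 1] (fun _ => 1) (2 ^ (m + 1)) = ((2 ^ m : ℝ) + 1) / 2 ^ (m + 1) := by
  have hsplit : 2 ^ (m + 1) = (2 ^ m + 1) + (2 ^ m - 1) := by
    have := Nat.one_le_two_pow (n := m)
    rw [pow_succ]
    omega
  have hgain : ∀ j ∈ Finset.Ico (2 ^ m + 1) (2 ^ (m + 1)), gainC j = (j : ℝ) / (j + 1) :=
    fun j hj => gainC_of_lt_of_lt (by simp at hj; omega) (Finset.mem_Ico.mp hj).2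
  rw [hsplit, iterate_cascadeGamma_apply_add _ _ (by omega), mul_one, ← hsplit,
    Finset.prod_congr rfl hgain, Finset.prod_Ico_div_succ (by omega) (by omega)]
  push_cast
  rfl

lemma one_half_le_two_pow_add_one_div (m : ℕ) :
    (1 / 2 : ℝ) ≤ ((2 ^ m : ℝ) + 1) / 2 ^ (m + 1) := by
  rw [pow_succ, le_div_iff₀ (by positivity)]
  linarith

lemma one_half_le_iSup_abs_iterate_cascadeGamma (m : ℕ) :
    (1 / 2 : ℝ) ≤ ⨆ i, |cascadeGamma^[2 ^ m - 1] (fun _ => (1 : ℝ)) i| := by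
  have hbdd : BddAbove (Set.range fun i => |cascadeGamma^[2 ^ m - 1] (fun _ => (1 : ℝ)) i|) :=
    ⟨1, Set.forall_mem_range.2 (abs_iterate_cascadeGamma_le (by simp) _)⟩
  refine le_ciSup_of_le hbdd (2 ^ (m + 1)) ((le_abs_self _).trans' ?_)
  rw [iterate_cascadeGamma_one_two_pow]
  exact one_half_le_two_pow_add_one_div m

/-- For the cascade gain operator, the component of index `2ᵏ` of
`Γ^{2^{k-1}-1}(𝟙)` equals `(2^{k-1}+1)/2ᵏ ≥ 1/2`; consequently `Γⁿ(𝟙)` does not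
converge to `0` in the `ℓ∞`-norm, i.e. the induced discrete-time system is not UGAS. -/
theorem stmt18 :
    (∀ k : ℕ, 1 ≤ k →
      (cascadeGamma^[2 ^ (k - 1) - 1] (fun _ => 1)) (2 ^ k)
          = ((2 ^ (k - 1) : ℝ) + 1) / 2 ^ k ∧
      (1 / 2 : ℝ) ≤ (cascadeGamma^[2 ^ (k - 1) - 1] (fun _ => 1)) (2 ^ k)) ∧
    ¬ Filter.Tendsto (fun n => ⨆ i, |(cascadeGamma^[n] (fun _ => (1 : ℝ))) i|)
        Filter.atTop (nhds 0) := by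
  refine ⟨fun k hk => ?_, fun hlim => ?_⟩
  · obtain ⟨m, rfl⟩ := Nat.exists_eq_add_of_le' hk
    rw [Nat.add_sub_cancel, iterate_cascadeGamma_one_two_pow]
    exact ⟨rfl, one_half_le_two_pow_add_one_div m⟩
  · have hfreq : ∃ᶠ n in Filter.atTop,
        (1 / 2 : ℝ) ≤ ⨆ i, |cascadeGamma^[n] (fun _ => (1 : ℝ)) i| :=
      Filter.frequently_atTop.2 fun N =>
        ⟨2 ^ N - 1, by have := N.lt_two_pow_self; omega,
          one_half_le_iSup_abs_iterate_cascadeGamma N⟩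
    obtain ⟨n, hlow, hhigh⟩ :=
      (hfreq.and_eventually (hlim.eventually (gt_mem_nhds one_half_pos))).exists
    linarith
end

section
/- Let Γ be a max-type gain operator on ℓ∞⁺ such that every subsystem influences only finitely many others (for each j, γ_{ij} ≠ 0 for only finitely many i), and suppose there exist r > 0, α > 0, and sequences i_k → ∞, j_k ∈ ℕ with γ_{i_k j_k}(r) ≥ α for all large k. Then the image under Γ of the bounded set C := { r·e_{j_k} : k ∈ ℕ } ⊂ ℓ∞⁺ is not relatively compact in ℓ∞; in particular Γ is not a compact operator. -/
open scoped BoundedContinuousFunction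

/-- Suppose every subsystem influences only finitely many others (each
column of the gain matrix has finite support), and there are `r, α > 0` and sequences
`i_k → ∞`, `j_k` with `γ_{i_k j_k}(r) ≥ α` for all large `k`. Then the image under
the gain operator `Γ` of the bounded set `C = { r·e_{j_k} : k ∈ ℕ }` is not
relatively compact in `ℓ∞` (modeled as `ℕ →ᵇ ℝ`); in particular `Γ` is not a compact
operator. -/
theorem stmt19 (γ : ℕ → ℕ → ℝ → ℝ)
    (hγ : ∀ i j, γ i j = 0 ∨ (γ i j 0 = 0 ∧ StrictMonoOn (γ i j) (Set.Ici 0) ∧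
      ContinuousOn (γ i j) (Set.Ici 0) ∧ ∀ r : ℝ, 0 ≤ r → 0 ≤ γ i j r))
    (hfincol : ∀ j, {i | γ i j ≠ 0}.Finite)
    (r α : ℝ) (hr : 0 < r) (hα : 0 < α)
    (i : ℕ → ℕ) (hi : Filter.Tendsto i Filter.atTop Filter.atTop)
    (j : ℕ → ℕ)
    (hlow : ∀ᶠ k in Filter.atTop, α ≤ γ (i k) (j k) r)
    (Γ : (ℕ →ᵇ ℝ) → (ℕ →ᵇ ℝ))
    (hΓ : ∀ s : ℕ →ᵇ ℝ, ∀ m : ℕ, Γ s m = ⨆ l, γ m l (s l)) :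
    ¬ IsCompact (closure
      (Γ '' {f : ℕ →ᵇ ℝ | ∃ k : ℕ, ∀ m : ℕ, f m = if m = j k then r else 0})) := by
  intro hcomp
  have hnn : ∀ m l, 0 ≤ γ m l r := by
    intro m l
    rcases hγ m l with h | h
    · simp [h]
    · exact h.2.2.2 r hr.le
  have hzero : ∀ m l, γ m l 0 = 0 := by
    intro m l
    rcases hγ m l with h | h
    · simp [h]
    · exact h.1
  -- construct the elements r·e_{j k} as bounded continuous functions
  have hf : ∀ k, ∃ f : ℕ →ᵇ ℝ, ∀ m, f m = if m = j k then r else 0 := by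
    intro k
    refine ⟨BoundedContinuousFunction.ofNormedAddCommGroup
      (fun m => if m = j k then r else 0) continuous_of_discreteTopology r ?_, fun m => rfl⟩
    intro m
    by_cases h : m = j k <;> simp [h, abs_of_nonneg hr.le, hr.le]
  choose f hfval using hf
  -- compute Γ (f k) pointwise
  have hval : ∀ k m, Γ (f k) m = γ m (j k) r := by
    intro k m
    rw [hΓ]
    have heq : ∀ l, γ m l (f k l) = if l = j k then γ m (j k) r else 0 := by
      intro l
      rw [hfval]
      by_cases h : l = j k <;> simp [h, hzero]
    have hbdd : BddAbove (Set.range fun l => γ m l (f k l)) := by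
      refine ⟨γ m (j k) r, ?_⟩
      rintro x ⟨l, rfl⟩
      simp only [heq]
      split
      · exact le_rfl
      · exact hnn m (j k)
    apply le_antisymm
    · apply ciSup_le
      intro l
      rw [heq]
      split
      · exact le_rfl
      · exact hnn m (j k)
    · have h := le_ciSup hbdd (j k)
      rw [heq (j k)] at h
      simpa using h
  set g : ℕ → (ℕ →ᵇ ℝ) := fun k => Γ (f k) with hg
  have hmem : ∀ k, g k ∈ closure
      (Γ '' {f : ℕ →ᵇ ℝ | ∃ k : ℕ, ∀ m : ℕ, f m = if m = j k then r else 0}) := by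
    intro k
    exact subset_closure ⟨f k, ⟨k, hfval k⟩, rfl⟩
  obtain ⟨a, -, φ, hφ, hconv⟩ := hcomp.tendsto_subseq hmem
  rw [Metric.tendsto_atTop] at hconv
  obtain ⟨N, hN⟩ := hconv (α / 2) (by linarith)
  -- the column j (φ N) has finite support, bounded by some b
  obtain ⟨b, hb⟩ := (hfincol (j (φ N))).bddAbove
  have hiφ : Filter.Tendsto (fun n => i (φ n)) Filter.atTop Filter.atTop :=
    hi.comp hφ.tendsto_atTop
  have hlowφ : ∀ᶠ n in Filter.atTop, α ≤ γ (i (φ n)) (j (φ n)) r :=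
    hφ.tendsto_atTop.eventually hlow
  have hbig : ∀ᶠ n in Filter.atTop, b < i (φ n) := hiφ.eventually_gt_atTop b
  obtain ⟨n', hn'⟩ := ((Filter.eventually_ge_atTop N).and (hlowφ.and hbig)).exists
  obtain ⟨hn'N, hn'low, hn'big⟩ := hn'
  -- the two functions g (φ N) and g (φ n') differ by ≥ α at index i (φ n')
  have hz : γ (i (φ n')) (j (φ N)) = 0 := by
    by_contra h
    exact absurd (hb (Set.mem_setOf.mpr h)) (not_le.mpr hn'big)
  have h2 : α ≤ dist (g (φ N)) (g (φ n')) := by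
    have hd := BoundedContinuousFunction.dist_coe_le_dist (f := g (φ N)) (g := g (φ n'))
      (i (φ n'))
    have e1 : g (φ N) (i (φ n')) = 0 := by
      rw [hg]
      simp only
      rw [hval, hz]
      rfl
    have e2 : α ≤ g (φ n') (i (φ n')) := by
      rw [hg]
      simp only
      rw [hval]
      exact hn'low
    rw [e1] at hd
    rw [Real.dist_eq, abs_sub_comm, abs_of_nonneg (by linarith)] at hd
    linarith
  have h1 : dist (g (φ N)) (g (φ n')) < α := by
    calc dist (g (φ N)) (g (φ n')) ≤ dist (g (φ N)) a + dist (g (φ n')) a :=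
          dist_triangle_right _ _ _
      _ < α / 2 + α / 2 := add_lt_add (hN N le_rfl) (hN n' hn'N)
      _ = α := by ring
  linarith
end
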